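/- arXiv:2007.03998 — 3 statements merged into one kernel-verified Lean document; each statement's English description precedes it below -/
import Mathlib

section
/- Let N be an odd squarefree integer with ω(N) = 3 such that the smallest prime factor of N is at least 53 or the largest prime factor of N is greater than 37993. Then (10/(3π)) · ( ∏_{p prime, p ∣ N} (2 + p^{3/4})/(1 + p) + 3 · ∏_{p prime, p ∣ N} (2 + p^{1/2})/(1 + p) ) < 1/12. -/
/-!
For `α ≤ 1` the factor `(2 + x ^ α) / (1 + x)` decreases on `[1, ∞)`, so for odd primes
`p < q < r` the sum is largest at the smallest admissible primes: `(53, 59, 61)` when the least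
factor is at least `53`, and `(3, 5, 37994)` when the largest exceeds `37993`. Rational upper
bounds for the powers and `π > 3.141592` finish the estimate.
-/

open Finset

lemma exists_lt_lt_of_card_eq_three {α : Type*} [LinearOrder α] {s : Finset α}
    (h : s.card = 3) :
    ∃ a b c, a < b ∧ b < c ∧ s = {a, b, c} := by
  set e := s.orderEmbOfFin h
  refine ⟨e 0, e 1, e 2, e.strictMono (by decide), e.strictMono (by decide), ?_⟩
  rw [← s.image_orderEmbOfFin_univ h, Fin.univ_image_def]
  simp [List.ofFn_succ, e]

lemma rpow_le_of_pow_le_pow {α c a : ℝ} {m n : ℕ} (hc : 0 ≤ c) (ha : 0 ≤ a) (hn : n ≠ 0)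
    (hαmn : α * n = m) (h : c ^ m ≤ a ^ n) : c ^ α ≤ a := by
  rwa [← pow_le_pow_iff_left₀ (Real.rpow_nonneg hc α) ha hn, ← Real.rpow_mul_natCast hc, hαmn,
    Real.rpow_natCast]

noncomputable def weight (α x : ℝ) : ℝ := (2 + x ^ α) / (1 + x)

lemma weight_nonneg (α : ℝ) {x : ℝ} (hx : 0 ≤ x) : 0 ≤ weight α x := by
  unfold weight; positivity

lemma weight_antitoneOn {α : ℝ} (hα : α ≤ 1) : AntitoneOn (weight α) (Set.Ici 1) := by
  intro x (hx : 1 ≤ x) y (hy : 1 ≤ y) hxy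
  have hx0 : 0 < x := by linarith
  have hxα : x ^ α ≤ x := by simpa using Real.rpow_le_rpow_of_exponent_le hx hα
  have hcross : x * y ^ α ≤ y * x ^ α := by
    have := Real.rpow_le_rpow_of_nonpos hx0 hxy (by linarith : α - 1 ≤ 0)
    rw [Real.rpow_sub_one hx0.ne', Real.rpow_sub_one (by linarith : y ≠ 0),
      div_le_div_iff₀ (by linarith) hx0] at this
    linarith
  have hdiff : y ^ α - x ^ α ≤ y - x := by
    have : x * (y ^ α - x ^ α) ≤ x * (y - x) := by nlinarith [Real.rpow_nonneg hx0.le α]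
    exact le_of_mul_le_mul_left this hx0
  unfold weight
  rw [div_le_div_iff₀ (by positivity) (by positivity)]
  nlinarith

lemma weight_le_of_rpow_le {α c a x : ℝ} (hα : α ≤ 1) (hc : 1 ≤ c) (hcx : c ≤ x)
    (h : c ^ α ≤ a) : weight α x ≤ (2 + a) / (1 + c) := by
  refine (weight_antitoneOn hα hc (hc.trans hcx) hcx).trans ?_
  unfold weight
  gcongr

lemma weight_three_quarters_le {c a x : ℝ} (hc : 1 ≤ c) (hcx : c ≤ x) (ha : 0 ≤ a)
    (h : c ^ 3 ≤ a ^ 4) : weight (3 / 4) x ≤ (2 + a) / (1 + c) :=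
  weight_le_of_rpow_le (by norm_num) hc hcx
    (rpow_le_of_pow_le_pow (by linarith) ha four_ne_zero (by norm_num) h)

lemma weight_half_le {c a x : ℝ} (hc : 1 ≤ c) (hcx : c ≤ x) (ha : 0 ≤ a)
    (h : c ≤ a ^ 2) : weight (1 / 2) x ≤ (2 + a) / (1 + c) :=
  weight_le_of_rpow_le (by norm_num) hc hcx
    (rpow_le_of_pow_le_pow (m := 1) (by linarith) ha two_ne_zero (by norm_num) (by rwa [pow_one]))

noncomputable def weightSum (p q r : ℝ) : ℝ :=
  weight (3 / 4) p * (weight (3 / 4) q * weight (3 / 4) r) +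
    3 * (weight (1 / 2) p * (weight (1 / 2) q * weight (1 / 2) r))

lemma weightSum_lt_pi_div_forty_of_ge_53_59_61 {p q r : ℝ} (hp : 53 ≤ p) (hq : 59 ≤ q)
    (hr : 61 ≤ r) :
    weightSum p q r < Real.pi / 40 := by
  calc weightSum p q r
      ≤ (2 + 19642959 / 1000000) / (1 + 53) * ((2 + 5322051 / 250000) / (1 + 59) *
          ((2 + 682099 / 31250) / (1 + 61))) +
        3 * ((2 + 728011 / 100000) / (1 + 53) * ((2 + 3840573 / 500000) / (1 + 59) *
          ((2 + 31241 / 4000) / (1 + 61)))) := by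
        unfold weightSum
        gcongr ?_ * (?_ * ?_) + 3 * (?_ * (?_ * ?_))
        all_goals first
          | exact weight_three_quarters_le (by norm_num) ‹_› (by norm_num) (by norm_num)
          | exact weight_half_le (by norm_num) ‹_› (by norm_num) (by norm_num)
          | exact mul_nonneg (weight_nonneg _ (by linarith)) (weight_nonneg _ (by linarith))
          | exact weight_nonneg _ (by linarith)
    _ < 3.141592 / 40 := by norm_num
    _ < Real.pi / 40 := by linarith [Real.pi_gt_d6]

lemma weightSum_lt_pi_div_forty_of_ge_3_5_37994 {p q r : ℝ} (hp : 3 ≤ p) (hq : 5 ≤ q)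
    (hr : 37994 ≤ r) :
    weightSum p q r < Real.pi / 40 := by
  calc weightSum p q r
      ≤ (2 + 22795071 / 10000000) / (1 + 3) * ((2 + 4179627 / 1250000) / (1 + 5) *
          ((2 + 27213617 / 10000) / (1 + 37994))) +
        3 * ((2 + 17320509 / 10000000) / (1 + 3) * ((2 + 559017 / 250000) / (1 + 5) *
          ((2 + 389841 / 2000) / (1 + 37994)))) := by
        unfold weightSum
        gcongr ?_ * (?_ * ?_) + 3 * (?_ * (?_ * ?_))
        all_goals first
          | exact weight_three_quarters_le (by norm_num) ‹_› (by norm_num) (by norm_num)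
          | exact weight_half_le (by norm_num) ‹_› (by norm_num) (by norm_num)
          | exact mul_nonneg (weight_nonneg _ (by linarith)) (weight_nonneg _ (by linarith))
          | exact weight_nonneg _ (by linarith)
    -- the margin here is below `5e-7`, hence the seven-digit constants
    _ < 3.141592 / 40 := by norm_num
    _ < Real.pi / 40 := by linarith [Real.pi_gt_d6]

lemma weightSum_lt_pi_div_forty {p q r : ℕ} (hq : q.Prime) (hr : r.Prime) (hp : 2 < p)
    (hpq : p < q) (hqr : q < r) (h : 53 ≤ p ∨ 37993 < r) : weightSum p q r < Real.pi / 40 := by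
  rcases h with hp53 | hr37993
  · have hq59 : 59 ≤ q := by
      by_contra! hq'
      have : 53 < q := by omega
      interval_cases q <;> norm_num at hq
    have hr61 : 61 ≤ r := by
      by_contra! hr'
      obtain rfl : r = 60 := by omega
      norm_num at hr
    exact weightSum_lt_pi_div_forty_of_ge_53_59_61 (by exact_mod_cast hp53)
      (by exact_mod_cast hq59) (by exact_mod_cast hr61)
  · have hq5 : 5 ≤ q := by
      by_contra! hq'
      obtain rfl : q = 4 := by omega
      norm_num at hq
    exact weightSum_lt_pi_div_forty_of_ge_3_5_37994 (by exact_mod_cast hp)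
      (by exact_mod_cast hq5) (by exact_mod_cast hr37993)

lemma two_lt_of_mem_primeFactors_of_odd {N p : ℕ} (hN : Odd N) (hp : p ∈ N.primeFactors) :
    2 < p := by
  have hodd : Odd p := hN.of_dvd_nat (Nat.dvd_of_mem_primeFactors hp)
  refine (Nat.prime_of_mem_primeFactors hp).two_le.lt_of_ne ?_
  rintro rfl
  exact absurd hodd (by decide)

theorem key_inequality_omega_eq_3_general (N : ℕ) (hodd : Odd N)
    (hω : N.primeFactors.card = 3)
    (hP : (∀ p ∈ N.primeFactors, 53 ≤ p) ∨ (∃ p ∈ N.primeFactors, 37993 < p)) :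
    10 / (3 * Real.pi) *
        ((∏ p ∈ N.primeFactors, (2 + (p : ℝ) ^ ((3 : ℝ) / 4)) / (1 + (p : ℝ))) +
          3 * ∏ p ∈ N.primeFactors, (2 + (p : ℝ) ^ ((1 : ℝ) / 2)) / (1 + (p : ℝ))) <
      1 / 12 := by
  obtain ⟨p, q, r, hpq, hqr, hs⟩ := exists_lt_lt_of_card_eq_three hω
  have hmem : p ∈ N.primeFactors ∧ q ∈ N.primeFactors ∧ r ∈ N.primeFactors := by simp [hs]
  have hsum : weightSum p q r < Real.pi / 40 := by
    refine weightSum_lt_pi_div_forty (Nat.prime_of_mem_primeFactors hmem.2.1)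
      (Nat.prime_of_mem_primeFactors hmem.2.2) (two_lt_of_mem_primeFactors_of_odd hodd hmem.1)
      hpq hqr ?_
    simp only [hs, mem_insert, mem_singleton, forall_eq_or_imp, forall_eq,
      exists_eq_or_imp] at hP
    omega
  have hp : p ∉ ({q, r} : Finset ℕ) := by simp [hpq.ne, (hpq.trans hqr).ne]
  rw [hs, prod_insert hp, prod_pair hqr.ne, prod_insert hp, prod_pair hqr.ne]
  calc 10 / (3 * Real.pi) * weightSum p q r < 10 / (3 * Real.pi) * (Real.pi / 40) := by gcongr
    _ = 1 / 12 := by field_simp; ring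

/-- For an odd squarefree integer `N` with exactly `3` distinct prime factors whose smallest
prime factor is at least `53` or whose largest prime factor is greater than `37993`, the key
inequality holds. -/
theorem key_inequality_omega_eq_3 (N : ℕ) (hodd : Odd N) (hsf : Squarefree N)
    (hω : N.primeFactors.card = 3)
    (hP : (∀ p ∈ N.primeFactors, 53 ≤ p) ∨ (∃ p ∈ N.primeFactors, 37993 < p)) :
    10 / (3 * Real.pi) *
        ((∏ p ∈ N.primeFactors, (2 + (p : ℝ) ^ ((3 : ℝ) / 4)) / (1 + (p : ℝ))) +
          3 * ∏ p ∈ N.primeFactors, (2 + (p : ℝ) ^ ((1 : ℝ) / 2)) / (1 + (p : ℝ))) <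
      1 / 12 :=
  key_inequality_omega_eq_3_general N hodd hω hP
end

section
/- Let N be an odd squarefree integer with ω(N) = 2 such that the smallest prime factor of N is at least 269 or the largest prime factor of N is greater than 63737. Then (10/(3π)) · ( ∏_{p prime, p ∣ N} (2 + p^{3/4})/(1 + p) + 3 · ∏_{p prime, p ∣ N} (2 + p^{1/2})/(1 + p) ) < 1/12. -/
/-!
For `r ≤ 1` the factor `x ↦ (2 + x ^ r) / (1 + x)` is decreasing on `[1, ∞)`, so the sum of
the two products is largest at the smallest admissible pair of primes: `(269, 269)` in the
first case, and `(3, 63743)` in the second, since the primes are odd and there is no prime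
strictly between `63737` and `63743`. At these two points decimal upper bounds for the powers
bring the sum below `3.141592 / 40 < π / 40`; the second point leaves a margin of only `6 · 10⁻⁷`.
-/

open Finset

noncomputable def localFactor (r x : ℝ) : ℝ := (2 + x ^ r) / (1 + x)

lemma localFactor_nonneg (r : ℝ) {x : ℝ} (hx : 0 ≤ x) : 0 ≤ localFactor r x :=
  div_nonneg (by positivity) (by positivity)

lemma localFactor_antitoneOn {r : ℝ} (hr : r ≤ 1) :
    AntitoneOn (localFactor r) (Set.Ici 1) := by
  intro a (ha : 1 ≤ a) x (hx : 1 ≤ x) hax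
  -- with `y ^ r = y ^ (r - 1) * y` and `c = a ^ (r - 1) ≤ 1`, cross-multiplying leaves
  -- `(c - 2) * (x - a) ≤ 0`
  have hpow : ∀ y : ℝ, 0 < y → y ^ r = y ^ (r - 1) * y := fun y hy => by
    rw [← Real.rpow_add_one hy.ne', sub_add_cancel]
  have hxa : x ^ (r - 1) ≤ a ^ (r - 1) :=
    Real.rpow_le_rpow_of_nonpos (by linarith) hax (by linarith)
  have ha1 : a ^ (r - 1) ≤ 1 := Real.rpow_le_one_of_one_le_of_nonpos ha (by linarith)
  have hx0 : 0 ≤ x ^ (r - 1) := Real.rpow_nonneg (by linarith) _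
  unfold localFactor
  rw [hpow a (by linarith), hpow x (by linarith), div_le_div_iff₀ (by linarith) (by linarith)]
  nlinarith [mul_le_mul_of_nonneg_right hxa (by nlinarith : (0 : ℝ) ≤ x * (1 + a)),
    mul_le_mul_of_nonneg_left hax (by linarith : (0 : ℝ) ≤ 2 - a ^ (r - 1))]

lemma rpow_div_natCast_le_of_pow_le {m n : ℕ} {a u : ℝ} (hn : n ≠ 0) (ha : 0 ≤ a)
    (hu : 0 ≤ u) (h : a ^ m ≤ u ^ n) : a ^ ((m : ℝ) / n) ≤ u := by
  rwa [← pow_le_pow_iff_left₀ (Real.rpow_nonneg ha _) hu hn, ← Real.rpow_mul_natCast ha,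
    div_mul_cancel₀ _ (Nat.cast_ne_zero.mpr hn), Real.rpow_natCast]

lemma localFactor_le_of_pow_le {m n : ℕ} {a u : ℝ} (hn : n ≠ 0) (ha : 0 ≤ a) (hu : 0 ≤ u)
    (h : a ^ m ≤ u ^ n) : localFactor ((m : ℝ) / n) a ≤ (2 + u) / (1 + a) :=
  div_le_div_of_nonneg_right (by linarith [rpow_div_natCast_le_of_pow_le hn ha hu h])
    (by positivity)

noncomputable def keySum (x y : ℝ) : ℝ :=
  localFactor (3 / 4) x * localFactor (3 / 4) y +
    3 * (localFactor (1 / 2) x * localFactor (1 / 2) y)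

lemma keySum_comm (x y : ℝ) : keySum x y = keySum y x := by
  unfold keySum
  ring

lemma keySum_le_keySum {a b x y : ℝ} (ha : 1 ≤ a) (hax : a ≤ x) (hb : 1 ≤ b) (hby : b ≤ y) :
    keySum x y ≤ keySum a b := by
  have hx := ha.trans hax
  have hy := hb.trans hby
  have h34 := localFactor_antitoneOn (r := 3 / 4) (by norm_num)
  have h12 := localFactor_antitoneOn (r := 1 / 2) (by norm_num)
  unfold keySum
  gcongr ?_ + 3 * ?_
  · exact mul_le_mul (h34 ha hx hax) (h34 hb hy hby) (localFactor_nonneg _ (by linarith))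
      (localFactor_nonneg _ (by linarith))
  · exact mul_le_mul (h12 ha hx hax) (h12 hb hy hby) (localFactor_nonneg _ (by linarith))
      (localFactor_nonneg _ (by linarith))

lemma keySum_le_of_pow_le {a b u v s t : ℝ} (ha : 0 ≤ a) (hb : 0 ≤ b) (hu : 0 ≤ u)
    (hv : 0 ≤ v) (hs : 0 ≤ s) (ht : 0 ≤ t) (hau : a ^ 3 ≤ u ^ 4) (hbv : b ^ 3 ≤ v ^ 4)
    (has : a ≤ s ^ 2) (hbt : b ≤ t ^ 2) :
    keySum a b ≤ (2 + u) / (1 + a) * ((2 + v) / (1 + b)) +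
      3 * ((2 + s) / (1 + a) * ((2 + t) / (1 + b))) := by
  have h34 := fun {c w : ℝ} (hc : 0 ≤ c) (hw : 0 ≤ w) (h : c ^ 3 ≤ w ^ 4) => by
    simpa only [Nat.cast_ofNat] using
      localFactor_le_of_pow_le (m := 3) (n := 4) (by norm_num) hc hw h
  have h12 := fun {c w : ℝ} (hc : 0 ≤ c) (hw : 0 ≤ w) (h : c ^ 1 ≤ w ^ 2) => by
    simpa only [Nat.cast_ofNat, Nat.cast_one] using
      localFactor_le_of_pow_le (m := 1) (n := 2) (by norm_num) hc hw h
  unfold keySum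
  gcongr ?_ + 3 * ?_
  · exact mul_le_mul (h34 ha hu hau) (h34 hb hv hbv) (localFactor_nonneg _ hb) (by positivity)
  · exact mul_le_mul (h12 ha hs (by simpa using has)) (h12 hb ht (by simpa using hbt))
      (localFactor_nonneg _ hb) (by positivity)

lemma keySum_lt_pi_div_forty_of_269_le {x y : ℝ} (hx : 269 ≤ x) (hy : 269 ≤ y) :
    keySum x y < Real.pi / 40 := by
  refine (keySum_le_keySum (by norm_num) hx (by norm_num) hy).trans_lt ?_
  refine (keySum_le_of_pow_le (u := 66.4224) (v := 66.4224) (s := 16.4013) (t := 16.4013)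
    (by norm_num) (by norm_num) (by norm_num) (by norm_num) (by norm_num) (by norm_num)
    (by norm_num) (by norm_num) (by norm_num) (by norm_num)).trans_lt ?_
  linarith [Real.pi_gt_d6]

lemma keySum_lt_pi_div_forty_of_3_le_of_63743_le {x y : ℝ} (hx : 3 ≤ x) (hy : 63743 ≤ y) :
    keySum x y < Real.pi / 40 := by
  refine (keySum_le_keySum (by norm_num) hx (by norm_num) hy).trans_lt ?_
  refine (keySum_le_of_pow_le (u := 2.279508) (v := 4011.6624) (s := 1.7320509)
    (t := 252.47377) (by norm_num) (by norm_num) (by norm_num) (by norm_num) (by norm_num)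
    (by norm_num) (by norm_num) (by norm_num) (by norm_num) (by norm_num)).trans_lt ?_
  linarith [Real.pi_gt_d6]

lemma Nat.three_le_of_mem_primeFactors_of_odd {N p : ℕ} (hN : Odd N)
    (hp : p ∈ N.primeFactors) : 3 ≤ p := by
  have h2 : p ≠ 2 := by
    rintro rfl
    exact Nat.not_even_iff_odd.mpr hN (even_iff_two_dvd.mpr (Nat.dvd_of_mem_primeFactors hp))
  have := (Nat.prime_of_mem_primeFactors hp).two_le
  omega

lemma Nat.Prime.ge_63743_of_gt_63737 {p : ℕ} (hp : p.Prime) (h : 63737 < p) : 63743 ≤ p := by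
  by_contra! h'
  interval_cases p <;> norm_num at hp

theorem key_inequality_omega_eq_2_general (N : ℕ) (hodd : Odd N)
    (hω : N.primeFactors.card = 2)
    (hP : (∀ p ∈ N.primeFactors, 269 ≤ p) ∨ (∃ p ∈ N.primeFactors, 63737 < p)) :
    10 / (3 * Real.pi) *
        ((∏ p ∈ N.primeFactors, (2 + (p : ℝ) ^ ((3 : ℝ) / 4)) / (1 + (p : ℝ))) +
          3 * ∏ p ∈ N.primeFactors, (2 + (p : ℝ) ^ ((1 : ℝ) / 2)) / (1 + (p : ℝ))) <
      1 / 12 := by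
  obtain ⟨p, q, hpq, hN⟩ := Finset.card_eq_two.mp hω
  suffices hkey : keySum p q < Real.pi / 40 by
    rw [hN, prod_pair hpq, prod_pair hpq]
    calc _ = 10 / (3 * Real.pi) * keySum p q := rfl
      _ < 10 / (3 * Real.pi) * (Real.pi / 40) := by gcongr
      _ = 1 / 12 := by field_simp; ring
  have h3 : ∀ r ∈ N.primeFactors, (3 : ℝ) ≤ r := fun r hr => by
    exact_mod_cast Nat.three_le_of_mem_primeFactors_of_odd hodd hr
  have hp : p ∈ N.primeFactors := by simp [hN]
  have hq : q ∈ N.primeFactors := by simp [hN]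
  rcases hP with h269 | ⟨r, hr, hbig⟩
  · exact keySum_lt_pi_div_forty_of_269_le (by exact_mod_cast h269 p hp)
      (by exact_mod_cast h269 q hq)
  have h63743 : (63743 : ℝ) ≤ r := by
    exact_mod_cast (Nat.prime_of_mem_primeFactors hr).ge_63743_of_gt_63737 hbig
  rw [hN, mem_insert, mem_singleton] at hr
  rcases hr with rfl | rfl
  · rw [keySum_comm]
    exact keySum_lt_pi_div_forty_of_3_le_of_63743_le (h3 q hq) h63743
  · exact keySum_lt_pi_div_forty_of_3_le_of_63743_le (h3 p hp) h63743

/-- For an odd squarefree integer `N` with exactly `2` distinct prime factors whose smallest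
prime factor is at least `269` or whose largest prime factor is greater than `63737`, the key
inequality holds. -/
theorem key_inequality_omega_eq_2 (N : ℕ) (hodd : Odd N) (hsf : Squarefree N)
    (hω : N.primeFactors.card = 2)
    (hP : (∀ p ∈ N.primeFactors, 269 ≤ p) ∨ (∃ p ∈ N.primeFactors, 63737 < p)) :
    10 / (3 * Real.pi) *
        ((∏ p ∈ N.primeFactors, (2 + (p : ℝ) ^ ((3 : ℝ) / 4)) / (1 + (p : ℝ))) +
          3 * ∏ p ∈ N.primeFactors, (2 + (p : ℝ) ^ ((1 : ℝ) / 2)) / (1 + (p : ℝ))) <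
      1 / 12 :=
  key_inequality_omega_eq_2_general N hodd hω hP
end

section
/- Let P = {p₁ < p₂ < ... < pₙ} and P' = {q₁ < q₂ < ... < qₘ} be nonempty finite sets of odd primes with n ≤ m and pᵢ ≤ qᵢ for all 1 ≤ i ≤ n. If (10/(3π)) · ( ∏_{p ∈ P} (2 + p^{3/4})/(1 + p) + 3 · ∏_{p ∈ P} (2 + p^{1/2})/(1 + p) ) < 1/12, then also (10/(3π)) · ( ∏_{q ∈ P'} (2 + q^{3/4})/(1 + q) + 3 · ∏_{q ∈ P'} (2 + q^{1/2})/(1 + q) ) < 1/12. -/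
/-!
Write `f_α(x) = (2 + x^α)/(1 + x)`. For `α ≤ 1` the map `f_α` is antitone on `[1, ∞)`, and for
`α ≤ 3/4` it is at most `1` on `[4, ∞)`, because `x^{3/4} ≤ x - 1` there. Comparing the sorted
lists `p₁ < … < pₙ` and `q₁ < … < qₘ`, the first `n` factors for `P'` are bounded by the
corresponding factors for `P`, and each of the remaining ones is `≤ 1` since `qᵢ > q₁ ≥ 3` for
`i > n ≥ 1`. Hence both products, and with them the left-hand side, can only decrease from
`P` to `P'`.
-/

open Finset

noncomputable def keyFactor (α x : ℝ) : ℝ := (2 + x ^ α) / (1 + x)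

lemma keyFactor_antitoneOn {α : ℝ} (hα : α ≤ 1) : AntitoneOn (keyFactor α) (Set.Ici 1) := by
  intro p (hp : 1 ≤ p) q _ hpq
  have hp0 : 0 < p := by linarith
  have hrpow_le_self : p ^ α ≤ p := by
    simpa using Real.rpow_le_rpow_of_exponent_le hp hα
  -- `x ↦ x ^ (α - 1)` is antitone
  have hcross : p * q ^ α ≤ q * p ^ α := by
    have h := Real.rpow_le_rpow_of_nonpos hp0 hpq (sub_nonpos.2 hα)
    rw [Real.rpow_sub hp0, Real.rpow_sub (by linarith), Real.rpow_one, Real.rpow_one,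
      div_le_div_iff₀ (by linarith) hp0] at h
    linarith
  unfold keyFactor
  rw [div_le_div_iff₀ (by linarith) (by linarith)]
  -- `p * q ^ α ≤ q * p ^ α` and `p ^ α ≤ p` give `q ^ α ≤ p ^ α + (q - p)`
  nlinarith [mul_nonneg (sub_nonneg.2 hpq) (sub_nonneg.2 hrpow_le_self)]

lemma rpow_three_quarters_le_sub_one {x : ℝ} (hx : 4 ≤ x) : x ^ (3 / 4 : ℝ) ≤ x - 1 := by
  rw [← pow_le_pow_iff_left₀ (by positivity) (by linarith) (four_ne_zero),
    ← Real.rpow_natCast, ← Real.rpow_mul (by linarith)]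
  norm_num
  nlinarith [sq_nonneg (x - 4), mul_nonneg (sub_nonneg.2 hx) (sq_nonneg x)]

lemma keyFactor_le_one {α x : ℝ} (hα : α ≤ 3 / 4) (hx : 4 ≤ x) : keyFactor α x ≤ 1 := by
  have : x ^ α ≤ x ^ (3 / 4 : ℝ) := Real.rpow_le_rpow_of_exponent_le (by linarith) hα
  rw [keyFactor, div_le_one (by linarith)]
  linarith [rpow_three_quarters_le_sub_one hx]

lemma keyFactor_nonneg {α x : ℝ} (hx : 0 ≤ x) : 0 ≤ keyFactor α x := by
  unfold keyFactor
  positivity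

lemma List.Pairwise.exists_mem_rel_of_mem_drop {α : Type*} {R : α → α → Prop} {l : List α}
    (hl : l.Pairwise R) {k : ℕ} (hk : 0 < k) {y : α} (hy : y ∈ l.drop k) : ∃ x ∈ l, R x y := by
  obtain ⟨k, rfl⟩ := Nat.exists_eq_add_of_lt hk
  cases l with
  | nil => simp at hy
  | cons b t =>
    rw [zero_add, List.drop_succ_cons] at hy
    exact ⟨b, List.mem_cons_self, List.rel_of_pairwise_cons hl (List.mem_of_mem_drop hy)⟩

lemma List.prod_map_le_prod_map_of_getElem_le {α : Type*} [LE α] {f : α → ℝ} {l l' : List α}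
    (hlen : l.length ≤ l'.length)
    (hle : ∀ i (hi : i < l.length) (hi' : i < l'.length), l[i] ≤ l'[i])
    (hanti : ∀ x ∈ l, ∀ y ∈ l', x ≤ y → f y ≤ f x)
    (hnonneg : ∀ y ∈ l', 0 ≤ f y) (htail : ∀ y ∈ l'.drop l.length, f y ≤ 1) :
    (l'.map f).prod ≤ (l.map f).prod := by
  induction l generalizing l' with
  | nil =>
    simp only [List.length_nil, List.drop_zero] at htail
    rw [← Fin.prod_univ_getElem]
    simp only [List.getElem_map, List.map_nil, List.prod_nil]
    exact Finset.prod_le_one (fun i _ => hnonneg _ (List.getElem_mem _))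
      (fun i _ => htail _ (List.getElem_mem _))
  | cons a t ih =>
    cases l' with
    | nil => simp at hlen
    | cons b t' =>
      have hba : f b ≤ f a :=
        hanti a List.mem_cons_self b List.mem_cons_self (hle 0 (by simp) (by simp))
      have hprod : (t'.map f).prod ≤ (t.map f).prod :=
        ih (by simpa using hlen)
          (fun i hi hi' => hle (i + 1) (by simpa using hi) (by simpa using hi'))
          (fun x hx y hy => hanti x (List.mem_cons_of_mem _ hx) y (List.mem_cons_of_mem _ hy))
          (fun y hy => hnonneg y (List.mem_cons_of_mem _ hy)) (by simpa using htail)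
      simp only [List.map_cons, List.prod_cons]
      exact mul_le_mul hba hprod
        (List.prod_nonneg (by simpa using fun y hy => hnonneg y (List.mem_cons_of_mem _ hy)))
        ((hnonneg b List.mem_cons_self).trans hba)

lemma Finset.prod_eq_prod_map_sort {β : Type*} [CommMonoid β] (s : Finset ℕ) (f : ℕ → β) :
    ∏ x ∈ s, f x = ((s.sort (· ≤ ·)).map f).prod := by
  rw [Finset.prod_eq_multiset_prod, ← Finset.sort_eq s (· ≤ ·)]
  rfl

lemma prod_keyFactor_le_of_sort_le {α : ℝ} (hα : α ≤ 3 / 4) {s t : Finset ℕ}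
    (hs : ∀ p ∈ s, 1 ≤ p) (ht : ∀ q ∈ t, 3 ≤ q) (hsne : s.Nonempty) (hcard : s.card ≤ t.card)
    (hle : ∀ i : ℕ, ∀ (hi : i < (s.sort (· ≤ ·)).length) (hi' : i < (t.sort (· ≤ ·)).length),
        (s.sort (· ≤ ·))[i]'hi ≤ (t.sort (· ≤ ·))[i]'hi') :
    ∏ q ∈ t, keyFactor α q ≤ ∏ p ∈ s, keyFactor α p := by
  rw [prod_eq_prod_map_sort, prod_eq_prod_map_sort]
  refine List.prod_map_le_prod_map_of_getElem_le (by simpa using hcard) hle ?_ ?_ ?_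
  · intro p hp q hq hpq
    have hp1 : (1 : ℝ) ≤ p := by exact_mod_cast hs p ((mem_sort _).1 hp)
    exact keyFactor_antitoneOn (by linarith) (Set.mem_Ici.2 hp1)
      (Set.mem_Ici.2 (hp1.trans (by exact_mod_cast hpq))) (by exact_mod_cast hpq)
  · exact fun q _ => keyFactor_nonneg q.cast_nonneg
  · intro q hq
    -- every entry past position `#s ≥ 1` exceeds the smallest element of `t`, which is `≥ 3`
    obtain ⟨p, hp, hpq⟩ := (sortedLT_sort t).pairwise.exists_mem_rel_of_mem_drop
      (by simpa using hsne.card_pos) hq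
    have hq4 : 4 ≤ q := by linarith [ht p ((mem_sort _).1 hp)]
    exact keyFactor_le_one hα (by exact_mod_cast hq4)

theorem key_inequality_mono_general (P P' : Finset ℕ)
    (hP : ∀ p ∈ P, p.Prime ∧ Odd p) (hP' : ∀ q ∈ P', q.Prime ∧ Odd q)
    (hPne : P.Nonempty)
    (hcard : P.card ≤ P'.card)
    (hle : ∀ i : ℕ, ∀ (hi : i < (P.sort (· ≤ ·)).length)
        (hi' : i < (P'.sort (· ≤ ·)).length),
        (P.sort (· ≤ ·))[i]'hi ≤ (P'.sort (· ≤ ·))[i]'hi')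
    (h : 10 / (3 * Real.pi) *
        ((∏ p ∈ P, (2 + (p : ℝ) ^ ((3 : ℝ) / 4)) / (1 + (p : ℝ))) +
          3 * ∏ p ∈ P, (2 + (p : ℝ) ^ ((1 : ℝ) / 2)) / (1 + (p : ℝ))) < 1 / 12) :
    10 / (3 * Real.pi) *
        ((∏ q ∈ P', (2 + (q : ℝ) ^ ((3 : ℝ) / 4)) / (1 + (q : ℝ))) +
          3 * ∏ q ∈ P', (2 + (q : ℝ) ^ ((1 : ℝ) / 2)) / (1 + (q : ℝ))) < 1 / 12 := by
  have hP1 : ∀ p ∈ P, 1 ≤ p := fun p hp => (hP p hp).1.one_lt.le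
  have hP'3 : ∀ q ∈ P', 3 ≤ q := fun q hq => by
    obtain ⟨hprime, k, rfl⟩ := hP' q hq
    have := hprime.two_le
    omega
  have h34 := prod_keyFactor_le_of_sort_le (α := 3 / 4) (by norm_num) hP1 hP'3 hPne hcard hle
  have h12 := prod_keyFactor_le_of_sort_le (α := 1 / 2) (by norm_num) hP1 hP'3 hPne hcard hle
  refine lt_of_le_of_lt (mul_le_mul_of_nonneg_left ?_ (by positivity)) h
  unfold keyFactor at h34 h12
  linarith

/-- If `P ⪯ P'` are nonempty finite sets of odd primes (i.e. `|P| ≤ |P'|` and the `i`-th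
smallest element of `P` is at most the `i`-th smallest element of `P'` for each `i ≤ |P|`),
then the key inequality for `P` implies the key inequality for `P'`. -/
theorem key_inequality_mono (P P' : Finset ℕ)
    (hP : ∀ p ∈ P, p.Prime ∧ Odd p) (hP' : ∀ q ∈ P', q.Prime ∧ Odd q)
    (hPne : P.Nonempty) (hP'ne : P'.Nonempty)
    (hcard : P.card ≤ P'.card)
    (hle : ∀ i : ℕ, ∀ (hi : i < (P.sort (· ≤ ·)).length)
        (hi' : i < (P'.sort (· ≤ ·)).length),
        (P.sort (· ≤ ·))[i]'hi ≤ (P'.sort (· ≤ ·))[i]'hi')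
    (h : 10 / (3 * Real.pi) *
        ((∏ p ∈ P, (2 + (p : ℝ) ^ ((3 : ℝ) / 4)) / (1 + (p : ℝ))) +
          3 * ∏ p ∈ P, (2 + (p : ℝ) ^ ((1 : ℝ) / 2)) / (1 + (p : ℝ))) < 1 / 12) :
    10 / (3 * Real.pi) *
        ((∏ q ∈ P', (2 + (q : ℝ) ^ ((3 : ℝ) / 4)) / (1 + (q : ℝ))) +
          3 * ∏ q ∈ P', (2 + (q : ℝ) ^ ((1 : ℝ) / 2)) / (1 + (q : ℝ))) < 1 / 12 :=
  key_inequality_mono_general P P' hP hP' hPne hcard hle h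
end
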